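/- arXiv:1508.01602 — 4 statements merged into one kernel-verified Lean document; each statement's English description precedes it below -/
import Mathlib

section
/- Relative-entropy decomposition bound: Let P and Q be probability mass functions on a finite set X with P absolutely continuous with respect to Q, and suppose P = P₁ + P₂ where P₁ and P₂ are nonnegative measures on X, each absolutely continuous with respect to Q. Then d(P, Q) ≤ h(∑_x P₁(x)) + ∑_{x : P₁(x) > 0} P₁(x) log₂(P₁(x)/Q(x)) + ∑_{x : P₂(x) > 0} P₂(x) log₂(P₂(x)/Q(x)), where h(t) = −t log₂ t − (1−t) log₂(1−t) is the binary entropy function (with h(0) = h(1) = 0). -/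
open scoped BigOperators Classical
open Finset

noncomputable section SoftCovering

/-- The `n`-fold i.i.d. extension of a pmf `Q`. -/
def prodPMF {U : Type} (Q : U → ℝ) (n : ℕ) : (Fin n → U) → ℝ :=
  fun x => ∏ i, Q (x i)

/-- The `n`-fold memoryless extension of a channel `W`. -/
def prodChannel {U V : Type} (W : U → V → ℝ) (n : ℕ) : (Fin n → U) → (Fin n → V) → ℝ :=
  fun x y => ∏ i, W (x i) (y i)

/-- Output marginal `Q_V(v) = ∑ u, Q_U(u) Q_{V|U}(v|u)`. -/
def outputMarginal {U V : Type} [Fintype U] (Q : U → ℝ) (W : U → V → ℝ) : V → ℝ :=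
  fun v => ∑ u, Q u * W u v

/-- Relative entropy (KL divergence) in bits, summed over the support of `P`. -/
def klDiv {X : Type} [Fintype X] (P Q : X → ℝ) : ℝ :=
  ∑ x, if 0 < P x then P x * Real.logb 2 (P x / Q x) else 0

/-- Mutual information in bits: `I_Q(U;V) = d(Q_{U,V}, Q_U × Q_V)`. -/
def mutualInfo {U V : Type} [Fintype U] [Fintype V] (Q : U → ℝ) (W : U → V → ℝ) : ℝ :=
  klDiv (fun p : U × V => Q p.1 * W p.1 p.2)
        (fun p : U × V => Q p.1 * outputMarginal Q W p.2)

/-- The jointly typical set `A_ε`. -/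
def typicalSet {U V : Type} [Fintype U] [Fintype V] (Q : U → ℝ) (W : U → V → ℝ)
    (n : ℕ) (ε : ℝ) : Set ((Fin n → U) × (Fin n → V)) :=
  {p | (1 / (n : ℝ)) * Real.logb 2
      (prodChannel W n p.1 p.2 / prodPMF (outputMarginal Q W) n p.2)
      ≤ mutualInfo Q W + ε}

/-- Probability weight of a particular codebook under i.i.d. codeword generation. -/
def cbProb {U : Type} (Q : U → ℝ) (n M : ℕ) (C : Fin M → Fin n → U) : ℝ :=
  ∏ m, prodPMF Q n (C m)

/-- Probability, over the random codebook, of the event `S`. -/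
def cbP {U : Type} [Fintype U] (Q : U → ℝ) (n M : ℕ)
    (S : (Fin M → Fin n → U) → Prop) : ℝ :=
  ∑ C : Fin M → Fin n → U, if S C then cbProb Q n M C else 0

/-- Expectation, over the random codebook, of `f`. -/
def cbE {U : Type} [Fintype U] (Q : U → ℝ) (n M : ℕ)
    (f : (Fin M → Fin n → U) → ℝ) : ℝ :=
  ∑ C : Fin M → Fin n → U, cbProb Q n M C * f C

/-- The induced output distribution `P_{V^n|𝒞}`. -/
def inducedDist {U V : Type} (W : U → V → ℝ) (n M : ℕ) (C : Fin M → Fin n → U) :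
    (Fin n → V) → ℝ :=
  fun y => (M : ℝ)⁻¹ * ∑ m, prodChannel W n (C m) y

/-- The typical part `P_{𝒞,1}` of the induced distribution. -/
def PC1 {U V : Type} [Fintype U] [Fintype V] (Q : U → ℝ) (W : U → V → ℝ) (n M : ℕ)
    (ε : ℝ) (C : Fin M → Fin n → U) : (Fin n → V) → ℝ :=
  fun y => (M : ℝ)⁻¹ *
    ∑ m, if (C m, y) ∈ typicalSet Q W n ε then prodChannel W n (C m) y else 0

/-- The atypical part `P_{𝒞,2}` of the induced distribution. -/
def PC2 {U V : Type} [Fintype U] [Fintype V] (Q : U → ℝ) (W : U → V → ℝ) (n M : ℕ)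
    (ε : ℝ) (C : Fin M → Fin n → U) : (Fin n → V) → ℝ :=
  fun y => (M : ℝ)⁻¹ *
    ∑ m, if (C m, y) ∉ typicalSet Q W n ε then prodChannel W n (C m) y else 0

/-- Density `D_{𝒞,1}` of `P_{𝒞,1}` with respect to `Q_{V^n}`. -/
def DC1 {U V : Type} [Fintype U] [Fintype V] (Q : U → ℝ) (W : U → V → ℝ) (n M : ℕ)
    (ε : ℝ) (C : Fin M → Fin n → U) : (Fin n → V) → ℝ :=
  fun y => PC1 Q W n M ε C y / prodPMF (outputMarginal Q W) n y

/-- Density `D_{𝒞,2}` of `P_{𝒞,2}` with respect to `Q_{V^n}`. -/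
def DC2 {U V : Type} [Fintype U] [Fintype V] (Q : U → ℝ) (W : U → V → ℝ) (n M : ℕ)
    (ε : ℝ) (C : Fin M → Fin n → U) : (Fin n → V) → ℝ :=
  fun y => PC2 Q W n M ε C y / prodPMF (outputMarginal Q W) n y

/-- `max_{v : Q_V(v) > 0} 1 / Q_V(v)`. -/
def maxInvQV {U V : Type} [Fintype U] (Q : U → ℝ) (W : U → V → ℝ) : ℝ :=
  sSup ((fun v => (outputMarginal Q W v)⁻¹) '' {v | 0 < outputMarginal Q W v})

/-- Rényi divergence of order `α` in bits. -/
def renyiDiv {X : Type} [Fintype X] (α : ℝ) (P Q : X → ℝ) : ℝ :=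
  (α - 1)⁻¹ * Real.logb 2 (∑ x, P x ^ α * Q x ^ (1 - α))

/-- Binary entropy function in bits. -/
def binEnt (x : ℝ) : ℝ := -(x * Real.logb 2 x) - (1 - x) * Real.logb 2 (1 - x)

/-- `P` is a probability mass function. -/
def IsPMF {X : Type} [Fintype X] (P : X → ℝ) : Prop :=
  (∀ x, 0 ≤ P x) ∧ ∑ x, P x = 1

/-- Probability that an i.i.d. pair sequence from `Q_{U,V}` is not jointly typical. -/
def atypProb {U V : Type} [Fintype U] [Fintype V] (Q : U → ℝ) (W : U → V → ℝ)
    (n : ℕ) (ε : ℝ) : ℝ :=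
  ∑ x : Fin n → U, ∑ y : Fin n → V,
    if (x, y) ∉ typicalSet Q W n ε then ∏ i, Q (x i) * W (x i) (y i) else 0

end SoftCovering

/-!
Since `P₁ + P₂ = P`, the chain rule splits `d(P, Q)` as
`d(P₁, Q) + d(P₂, Q) - d(P₁, P) - d(P₂, P)`, and the log-sum inequality bounds
`d(Pᵢ, P)` below by `sᵢ log₂ sᵢ`, where `s₁ = ∑ P₁` and `s₂ = ∑ P₂ = 1 - s₁` are the masses of the
two parts; the two lower bounds add up to `-h(s₁)`.
-/

open Real

section LogSum

variable {X : Type} [Fintype X]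

/-- The tangent-line bound `log y ≥ 1 - 1 / y` at `y = a / (c b)`. -/
lemma mul_logb_add_le_mul_logb_div {a b c : ℝ} (ha : 0 < a) (hb : 0 < b) (hc : 0 < c) :
    a * logb 2 c + (a - c * b) / log 2 ≤ a * logb 2 (a / b) := by
  have htangent := one_sub_inv_le_log_of_pos (show 0 < a / (c * b) by positivity)
  rw [log_div ha.ne' (by positivity), log_mul hc.ne' hb.ne', inv_div] at htangent
  have hlog2 : 0 < log 2 := log_pos one_lt_two
  rw [logb, logb, log_div ha.ne' hb.ne', ← sub_nonneg]
  have hscaled : 0 ≤ a * (log a - (log c + log b) - (1 - c * b / a)) :=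
    mul_nonneg ha.le (sub_nonneg.2 htangent)
  have : a * ((log a - log b) / log 2) - (a * (log c / log 2) + (a - c * b) / log 2)
      = a * (log a - (log c + log b) - (1 - c * b / a)) / log 2 := by
    field_simp
    ring
  rw [this]
  exact div_nonneg hscaled hlog2.le

lemma klDiv_eq_sum_mul_logb {R Q : X → ℝ} (hR : ∀ x, 0 ≤ R x) :
    klDiv R Q = ∑ x, R x * logb 2 (R x / Q x) := by
  refine sum_congr rfl fun x _ => ?_
  rcases (hR x).eq_or_lt with hx | hx
  · simp [← hx]
  · exact if_pos hx

lemma klDiv_sub_klDiv_eq_sum_mul_logb {R P Q : X → ℝ} (hR : ∀ x, 0 ≤ R x)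
    (hRP : ∀ x, P x = 0 → R x = 0) (hRQ : ∀ x, Q x = 0 → R x = 0) :
    klDiv R Q - klDiv R P = ∑ x, R x * logb 2 (P x / Q x) := by
  rw [klDiv_eq_sum_mul_logb hR, klDiv_eq_sum_mul_logb hR, ← sum_sub_distrib]
  refine sum_congr rfl fun x _ => ?_
  by_cases hx : R x = 0
  · simp [hx]
  have hPx : P x ≠ 0 := mt (hRP x) hx
  have hQx : Q x ≠ 0 := mt (hRQ x) hx
  rw [← mul_sub, ← logb_div (by positivity) (by positivity)]
  congr 2
  field_simp

/-- The log-sum inequality. -/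
theorem sum_mul_logb_sum_div_le_klDiv {R P : X → ℝ} (hR : ∀ x, 0 ≤ R x) (hP : ∀ x, 0 ≤ P x)
    (hRP : ∀ x, P x = 0 → R x = 0) :
    (∑ x, R x) * logb 2 ((∑ x, R x) / ∑ x, P x) ≤ klDiv R P := by
  rcases (sum_nonneg fun x _ => hR x).eq_or_lt with hr | hr
  · have hR0 : ∀ x, R x = 0 := fun x =>
      (sum_eq_zero_iff_of_nonneg fun x _ => hR x).1 hr.symm x (mem_univ x)
    simp [klDiv, hR0]
  have hp : 0 < ∑ x, P x := by
    refine (sum_nonneg fun x _ => hP x).lt_of_ne fun hp => hr.ne' (sum_eq_zero fun x _ => ?_)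
    exact hRP x ((sum_eq_zero_iff_of_nonneg fun x _ => hP x).1 hp.symm x (mem_univ x))
  set c := (∑ x, R x) / ∑ x, P x with hc
  have hc_pos : 0 < c := div_pos hr hp
  have hlog2 : 0 < log 2 := log_pos one_lt_two
  have htangent : ∀ x, R x * logb 2 c + (R x - c * P x) / log 2
      ≤ if 0 < R x then R x * logb 2 (R x / P x) else 0 := by
    intro x
    split_ifs with hx
    · have hPx : 0 < P x := (hP x).lt_of_ne fun h => hx.ne' (hRP x h.symm)
      exact mul_logb_add_le_mul_logb_div hx hPx hc_pos
    · have hx0 : R x = 0 := le_antisymm (not_lt.1 hx) (hR x)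
      rw [hx0, zero_mul, zero_add, zero_sub, neg_div]
      exact neg_nonpos.2 (div_nonneg (mul_nonneg hc_pos.le (hP x)) hlog2.le)
  calc (∑ x, R x) * logb 2 c
      = ∑ x, (R x * logb 2 c + (R x - c * P x) / log 2) := by
        rw [sum_add_distrib, ← sum_div, sum_sub_distrib, ← mul_sum, ← sum_mul, hc,
          div_mul_cancel₀ _ hp.ne', sub_self, zero_div, add_zero]
    _ ≤ klDiv R P := sum_le_sum fun x _ => htangent x

end LogSum

theorem klDiv_decomposition_bound_general {X : Type} [Fintype X]
    (P Q P₁ P₂ : X → ℝ) (hP : IsPMF P)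
    (hP₁ : ∀ x, 0 ≤ P₁ x) (hP₂ : ∀ x, 0 ≤ P₂ x)
    (hsplit : ∀ x, P x = P₁ x + P₂ x)
    (hP₁Q : ∀ x, Q x = 0 → P₁ x = 0) (hP₂Q : ∀ x, Q x = 0 → P₂ x = 0) :
    klDiv P Q ≤ binEnt (∑ x, P₁ x)
      + (∑ x, if 0 < P₁ x then P₁ x * Real.logb 2 (P₁ x / Q x) else 0)
      + (∑ x, if 0 < P₂ x then P₂ x * Real.logb 2 (P₂ x / Q x) else 0) := by
  obtain ⟨hP_nonneg, hP_sum⟩ := hP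
  have hP₁P : ∀ x, P x = 0 → P₁ x = 0 := fun x h => by linarith [hsplit x, hP₁ x, hP₂ x]
  have hP₂P : ∀ x, P x = 0 → P₂ x = 0 := fun x h => by linarith [hsplit x, hP₁ x, hP₂ x]
  have hP₂_sum : ∑ x, P₂ x = 1 - ∑ x, P₁ x := by
    rw [← hP_sum, ← sum_sub_distrib]
    exact sum_congr rfl fun x _ => by rw [hsplit x]; ring
  have hchain : klDiv P Q
      = (klDiv P₁ Q - klDiv P₁ P) + (klDiv P₂ Q - klDiv P₂ P) := by
    rw [klDiv_sub_klDiv_eq_sum_mul_logb hP₁ hP₁P hP₁Q,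
      klDiv_sub_klDiv_eq_sum_mul_logb hP₂ hP₂P hP₂Q, klDiv_eq_sum_mul_logb hP_nonneg,
      ← sum_add_distrib]
    exact sum_congr rfl fun x _ => by rw [← add_mul, ← hsplit x]
  have h₁ := sum_mul_logb_sum_div_le_klDiv hP₁ hP_nonneg hP₁P
  have h₂ := sum_mul_logb_sum_div_le_klDiv hP₂ hP_nonneg hP₂P
  rw [hP_sum, div_one] at h₁ h₂
  rw [hP₂_sum] at h₂
  change klDiv P Q ≤ binEnt (∑ x, P₁ x) + klDiv P₁ Q + klDiv P₂ Q
  rw [hchain, binEnt]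
  linarith

/-- **Relative-entropy decomposition bound.** If the pmf `P` splits as `P = P₁ + P₂` with
`P₁, P₂` nonnegative measures absolutely continuous w.r.t. the pmf `Q`, then
`d(P,Q) ≤ h(∑ P₁) + ∑_{P₁>0} P₁ log₂(P₁/Q) + ∑_{P₂>0} P₂ log₂(P₂/Q)`. -/
theorem klDiv_decomposition_bound {X : Type} [Fintype X]
    (P Q P₁ P₂ : X → ℝ) (hP : IsPMF P) (hQ : IsPMF Q)
    (hPQ : ∀ x, Q x = 0 → P x = 0)
    (hP₁ : ∀ x, 0 ≤ P₁ x) (hP₂ : ∀ x, 0 ≤ P₂ x)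
    (hsplit : ∀ x, P x = P₁ x + P₂ x)
    (hP₁Q : ∀ x, Q x = 0 → P₁ x = 0) (hP₂Q : ∀ x, Q x = 0 → P₂ x = 0) :
    klDiv P Q ≤ binEnt (∑ x, P₁ x)
      + (∑ x, if 0 < P₁ x then P₁ x * Real.logb 2 (P₁ x / Q x) else 0)
      + (∑ x, if 0 < P₂ x then P₂ x * Real.logb 2 (P₂ x / Q x) else 0) :=
  klDiv_decomposition_bound_general P Q P₁ P₂ hP hP₁ hP₂ hsplit hP₁Q hP₂Q
end

section
/- High-probability bound on the atypical mass of the induced distribution: Fix ε > 0 and β₁ > 0, and suppose the probability under the n-fold product Q_{U,V}^n that (U^n, V^n) ∉ A_ε is at most 2^{−β₁ n}. Then the probability (over the i.i.d. draw of the codebook 𝒞) that ∑_{v^n} P_{𝒞,2}(v^n) ≥ 2 · 2^{−β₁ n} is at most exp(−(1/3) 2^{n(R − β₁)}). -/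
open scoped BigOperators Classical
open Finset

/-! Let `T(x)` be the probability that the channel output on input `x` is atypical. Then
`∑_y P_{𝒞,2}(y) = M⁻¹ ∑_m T(U^n(m))` is an average of `M` independent `[0, 1]`-valued variables
of mean `atypProb ≤ p = 2^{-β₁ n}`. A Chernoff bound with parameter `log 2`, together with
`2^t ≤ 1 + t` on `[0, 1]`, gives
`P(∑_m T(U^n(m)) ≥ 2Mp) ≤ 2^{-2Mp} (1 + p)^M ≤ exp(-(2 log 2 - 1) M p)`; finally
`2 log 2 - 1 > 1/3` and `M p ≥ 2^{n(R - β₁)}`. -/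

open Real

lemma exp_mul_le_one_add_mul_exp_sub_one {t : ℝ} (ht : t ∈ Set.Icc (0 : ℝ) 1) (s : ℝ) :
    exp (t * s) ≤ 1 + t * (exp s - 1) := by
  have h := convexOn_exp.2 (Set.mem_univ 0) (Set.mem_univ s) (sub_nonneg.2 ht.2) ht.1
    (sub_add_cancel 1 t)
  simp only [smul_eq_mul, mul_zero, zero_add, exp_zero, mul_one] at h
  linarith

lemma IsPMF.sum_mul_exp_le {X : Type} [Fintype X] {P T : X → ℝ} (hP : IsPMF P)
    (hT : ∀ x, T x ∈ Set.Icc (0 : ℝ) 1) (s : ℝ) :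
    ∑ x, P x * exp (T x * s) ≤ exp ((exp s - 1) * ∑ x, P x * T x) :=
  calc ∑ x, P x * exp (T x * s)
      ≤ ∑ x, P x * (1 + T x * (exp s - 1)) :=
        sum_le_sum fun x _ => mul_le_mul_of_nonneg_left
          (exp_mul_le_one_add_mul_exp_sub_one (hT x) s) (hP.1 x)
    _ = ∑ x, P x + (exp s - 1) * ∑ x, P x * T x := by
        rw [mul_sum, ← sum_add_distrib]
        exact sum_congr rfl fun x _ => by ring
    _ = (exp s - 1) * ∑ x, P x * T x + 1 := by rw [hP.2, add_comm]
    _ ≤ exp ((exp s - 1) * ∑ x, P x * T x) := add_one_le_exp _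

lemma isPMF_pi {ι X : Type} [Fintype ι] [DecidableEq ι] [Fintype X] {P : ι → X → ℝ}
    (hP : ∀ i, IsPMF (P i)) :
    IsPMF (fun y : ι → X => ∏ i, P i (y i)) :=
  ⟨fun y => prod_nonneg fun i _ => (hP i).1 (y i), by
    rw [← Fintype.prod_sum (fun i x => P i x)]
    exact prod_eq_one fun i _ => (hP i).2⟩

section Codebook

variable {U : Type} [Fintype U] {Q : U → ℝ} {n M : ℕ}

lemma isPMF_prodPMF (hQ : IsPMF Q) : IsPMF (prodPMF Q n) :=
  isPMF_pi fun _ => hQ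

lemma cbProb_nonneg (hQ : IsPMF Q) (C : Fin M → Fin n → U) : 0 ≤ cbProb Q n M C :=
  prod_nonneg fun m _ => (isPMF_prodPMF hQ).1 (C m)

lemma cbP_mono (hQ : IsPMF Q) {S S' : (Fin M → Fin n → U) → Prop} (h : ∀ C, S C → S' C) :
    cbP Q n M S ≤ cbP Q n M S' :=
  sum_le_sum fun C _ => by
    by_cases hS : S C
    · simp [hS, h C hS]
    · simpa [hS] using ite_nonneg (cbProb_nonneg hQ C) le_rfl

lemma cbP_le_cbE (hQ : IsPMF Q) {S : (Fin M → Fin n → U) → Prop}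
    {f : (Fin M → Fin n → U) → ℝ} (hf0 : ∀ C, 0 ≤ f C) (hf1 : ∀ C, S C → 1 ≤ f C) :
    cbP Q n M S ≤ cbE Q n M f :=
  sum_le_sum fun C _ => by
    by_cases hS : S C
    · simpa [hS] using le_mul_of_one_le_right (cbProb_nonneg hQ C) (hf1 C hS)
    · simpa [hS] using mul_nonneg (cbProb_nonneg hQ C) (hf0 C)

lemma cbE_const_mul_prod (c : ℝ) (g : (Fin n → U) → ℝ) :
    cbE Q n M (fun C => c * ∏ m, g (C m)) = c * (∑ x, prodPMF Q n x * g x) ^ M := by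
  simp only [cbE, cbProb, mul_left_comm _ c, ← mul_sum, ← prod_mul_distrib]
  rw [← Fintype.prod_sum (fun _ x => prodPMF Q n x * g x), prod_const, card_fin]

lemma cbP_le_sum_le_exp_mul_pow (hQ : IsPMF Q) (T : (Fin n → U) → ℝ) (a : ℝ) {s : ℝ} (hs : 0 ≤ s) :
    cbP Q n M (fun C => a ≤ ∑ m, T (C m)) ≤
      exp (-(a * s)) * (∑ x, prodPMF Q n x * exp (T x * s)) ^ M := by
  rw [← cbE_const_mul_prod]
  refine cbP_le_cbE hQ (fun C => by positivity) fun C hC => ?_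
  rw [← exp_sum, ← exp_add, one_le_exp_iff, ← sum_mul]
  nlinarith

end Codebook

section AtypicalMass

variable {U V : Type} [Fintype U] [Fintype V] (Q : U → ℝ) (W : U → V → ℝ) (n : ℕ) (ε : ℝ)

noncomputable def atypicalMass (x : Fin n → U) : ℝ :=
  ∑ y, if (x, y) ∉ typicalSet Q W n ε then prodChannel W n x y else 0

variable {Q W}

lemma atypicalMass_mem_Icc (hW : ∀ u, IsPMF (W u)) (x : Fin n → U) :
    atypicalMass Q W n ε x ∈ Set.Icc (0 : ℝ) 1 := by
  have hch : IsPMF (prodChannel W n x) := isPMF_pi fun i => hW (x i)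
  refine ⟨sum_nonneg fun y _ => ite_nonneg (hch.1 y) le_rfl, ?_⟩
  calc atypicalMass Q W n ε x ≤ ∑ y, prodChannel W n x y :=
        sum_le_sum fun y _ => ite_le_sup _ _ _ |>.trans (max_le le_rfl (hch.1 y))
    _ = 1 := hch.2

variable (Q W)

lemma sum_prodPMF_mul_atypicalMass :
    ∑ x, prodPMF Q n x * atypicalMass Q W n ε x = atypProb Q W n ε := by
  refine sum_congr rfl fun x _ => ?_
  rw [atypicalMass, mul_sum]
  refine sum_congr rfl fun y _ => ?_
  split_ifs <;> simp [prodPMF, prodChannel, prod_mul_distrib]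

lemma sum_PC2 (M : ℕ) (C : Fin M → Fin n → U) :
    ∑ y, PC2 Q W n M ε C y = (M : ℝ)⁻¹ * ∑ m, atypicalMass Q W n ε (C m) := by
  simp only [PC2, atypicalMass, ← mul_sum]
  rw [sum_comm]

end AtypicalMass

lemma rpow_mul_sub_le_ceil_mul (n : ℕ) (R β : ℝ) :
    (2 : ℝ) ^ ((n : ℝ) * (R - β)) ≤ ⌈(2 : ℝ) ^ ((n : ℝ) * R)⌉₊ * (2 : ℝ) ^ (-(β * n)) := by
  rw [show (n : ℝ) * (R - β) = n * R + -(β * n) by ring, rpow_add two_pos]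
  gcongr
  exact Nat.le_ceil _

lemma one_third_lt_two_mul_log_two_sub_one : (1 / 3 : ℝ) < 2 * log 2 - 1 := by
  linarith [log_two_gt_d9]

theorem atypical_mass_high_prob_general {U V : Type} [Fintype U] [Fintype V]
    (Q : U → ℝ) (W : U → V → ℝ) (hQ : IsPMF Q) (hW : ∀ u, IsPMF (W u))
    (R : ℝ) (ε : ℝ) (β₁ : ℝ) (n : ℕ)
    (hatyp : atypProb Q W n ε ≤ (2 : ℝ) ^ (-(β₁ * n))) :
    cbP Q n ⌈(2 : ℝ) ^ ((n : ℝ) * R)⌉₊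
      (fun C =>
        2 * (2 : ℝ) ^ (-(β₁ * n)) ≤
          ∑ y : Fin n → V, PC2 Q W n ⌈(2 : ℝ) ^ ((n : ℝ) * R)⌉₊ ε C y)
      ≤ Real.exp (-(1 / 3) * (2 : ℝ) ^ ((n : ℝ) * (R - β₁))) := by
  set M := ⌈(2 : ℝ) ^ ((n : ℝ) * R)⌉₊
  set p := (2 : ℝ) ^ (-(β₁ * n))
  have hM : (0 : ℝ) < M := (rpow_pos_of_pos two_pos _).trans_le (Nat.le_ceil _)
  have hMp : (2 : ℝ) ^ ((n : ℝ) * (R - β₁)) ≤ M * p := rpow_mul_sub_le_ceil_mul n R β₁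
  have hmgf_nonneg : 0 ≤ ∑ x, prodPMF Q n x * exp (atypicalMass Q W n ε x * log 2) :=
    sum_nonneg fun x _ => mul_nonneg ((isPMF_prodPMF hQ).1 x) (exp_pos _).le
  have hmgf : ∑ x, prodPMF Q n x * exp (atypicalMass Q W n ε x * log 2) ≤ exp p := by
    refine ((isPMF_prodPMF hQ).sum_mul_exp_le (atypicalMass_mem_Icc n ε hW) _).trans ?_
    rw [exp_log two_pos, sum_prodPMF_mul_atypicalMass]
    norm_num [hatyp]
  calc _ ≤ cbP Q n M (fun C => 2 * M * p ≤ ∑ m, atypicalMass Q W n ε (C m)) :=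
        cbP_mono hQ fun C hC => by
          rw [sum_PC2, le_inv_mul_iff₀ hM] at hC
          linarith
    _ ≤ exp (-(2 * M * p * log 2)) * exp p ^ M :=
        (cbP_le_sum_le_exp_mul_pow hQ _ _ (log_nonneg one_le_two)).trans <|
          mul_le_mul_of_nonneg_left (pow_le_pow_left₀ hmgf_nonneg hmgf M) (exp_pos _).le
    _ = exp (-((2 * log 2 - 1) * (M * p))) := by rw [← exp_nat_mul, ← exp_add]; ring_nf
    _ ≤ exp (-(1 / 3) * (2 : ℝ) ^ ((n : ℝ) * (R - β₁))) := by
        gcongr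
        nlinarith [one_third_lt_two_mul_log_two_sub_one,
          rpow_pos_of_pos two_pos ((n : ℝ) * (R - β₁))]

/-- **High-probability bound on the atypical mass.** If the atypicality probability is at
most `2^{-β₁ n}`, then the probability over the codebook draw that
`∑_{v^n} P_{𝒞,2}(v^n) ≥ 2·2^{-β₁ n}` is at most `exp(−(1/3) 2^{n(R−β₁)})`. -/
theorem atypical_mass_high_prob {U V : Type} [Fintype U] [Fintype V]
    (Q : U → ℝ) (W : U → V → ℝ) (hQ : IsPMF Q) (hW : ∀ u, IsPMF (W u))
    (R : ℝ) (hR0 : 0 < R) (ε : ℝ) (hε : 0 < ε) (β₁ : ℝ) (hβ₁ : 0 < β₁) (n : ℕ)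
    (hatyp : atypProb Q W n ε ≤ (2 : ℝ) ^ (-(β₁ * n))) :
    cbP Q n ⌈(2 : ℝ) ^ ((n : ℝ) * R)⌉₊
      (fun C =>
        2 * (2 : ℝ) ^ (-(β₁ * n)) ≤
          ∑ y : Fin n → V, PC2 Q W n ⌈(2 : ℝ) ^ ((n : ℝ) * R)⌉₊ ε C y)
      ≤ Real.exp (-(1 / 3) * (2 : ℝ) ^ ((n : ℝ) * (R - β₁))) :=
  atypical_mass_high_prob_general Q W hQ hW R ε β₁ n hatyp
end

section
/- Pointwise high-probability bound on the typical density: Fix ε > 0, β₂ > 0, and v^n ∈ 𝒱^n with Q_{V^n}(v^n) > 0. Then the probability (over the i.i.d. draw of the codebook 𝒞) that D_{𝒞,1}(v^n) ≥ 1 + 2^{−β₂ n} is at most exp(−(1/3) 2^{n(R − I_Q(U;V) − ε − 2β₂)}). -/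
open scoped BigOperators Classical
open Finset

/-!
`D_{𝒞,1}(vⁿ)` is the empirical mean of `M` i.i.d. copies of the likelihood ratio
`Q(vⁿ|Uⁿ)/Q(vⁿ)` restricted to `A_ε`. This variable lies in `[0, b]` with `b = 2^{n(I+ε)}` by
the definition of `A_ε`, and has mean at most `1` because `∑ₓ Q(x) Q(vⁿ|x) = Q(vⁿ)`. The
multiplicative Chernoff bound for `[0, b]`-valued variables of mean at most `μ`,
`P(∑ Xₘ ≥ M(1+δ)μ) ≤ exp(-Mμδ²/(3b))` for `0 ≤ δ ≤ 1`, applied with `μ = 1`,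
`δ = 2^{-β₂n}` and `M ≥ 2^{nR}`, gives the claim.
-/

open Real

section Chernoff

variable {Ω : Type} [Fintype Ω] {p X : Ω → ℝ}

theorem Real.exp_mul_le_one_add_mul {f : ℝ} (s : ℝ) (hf0 : 0 ≤ f) (hf1 : f ≤ 1) :
    exp (f * s) ≤ 1 + f * (exp s - 1) := by
  have h := convexOn_exp.2 (Set.mem_univ 0) (Set.mem_univ s) (sub_nonneg.2 hf1) hf0 (by ring)
  simp only [smul_eq_mul, mul_zero, zero_add, exp_zero, mul_one] at h
  linear_combination h

theorem Real.exp_two_thirds_mul_sub_le {δ : ℝ} (h0 : 0 ≤ δ) (h1 : δ ≤ 1) :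
    exp (2 / 3 * δ) - 1 - 2 / 3 * δ * (1 + δ) ≤ -(δ ^ 2 / 3) := by
  have h := exp_bound' (x := 2 / 3 * δ) (by positivity) (by linarith) (n := 2) (by norm_num)
  norm_num [Finset.sum_range_succ] at h
  linarith

theorem sum_pi_ite_le_exp_mul_pow (hp : ∀ ω, 0 ≤ p ω) (X : Ω → ℝ) {t : ℝ} (ht : 0 ≤ t)
    (a : ℝ) (M : ℕ) :
    ∑ C : Fin M → Ω, (if a ≤ ∑ m, X (C m) then ∏ m, p (C m) else 0)
      ≤ exp (-(t * a)) * (∑ ω, p ω * exp (t * X ω)) ^ M := by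
  rw [Fintype.sum_pow, Finset.mul_sum]
  refine Finset.sum_le_sum fun C _ => ?_
  have hprod : ∏ m, (p (C m) * exp (t * X (C m)))
      = (∏ m, p (C m)) * exp (t * ∑ m, X (C m)) := by
    rw [Finset.prod_mul_distrib, ← exp_sum, Finset.mul_sum]
  have hp_prod : 0 ≤ ∏ m, p (C m) := Finset.prod_nonneg fun m _ => hp (C m)
  rw [hprod]
  split_ifs with h
  · have hexp : 1 ≤ exp (-(t * a)) * exp (t * ∑ m, X (C m)) := by
      rw [← exp_add]
      exact one_le_exp (by nlinarith)
    nlinarith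
  · positivity

theorem sum_mul_exp_mul_le_exp (hp0 : ∀ ω, 0 ≤ p ω) (hp1 : ∑ ω, p ω = 1) {b μ t : ℝ}
    (hb : 0 < b) (hX0 : ∀ ω, 0 ≤ X ω) (hXb : ∀ ω, X ω ≤ b) (hμ : ∑ ω, p ω * X ω ≤ μ)
    (ht : 0 ≤ t) :
    ∑ ω, p ω * exp (t * X ω) ≤ exp (μ / b * (exp (t * b) - 1)) := by
  have hconv : ∀ ω, exp (t * X ω) ≤ 1 + X ω / b * (exp (t * b) - 1) := fun ω => by
    have h := exp_mul_le_one_add_mul (t * b) (div_nonneg (hX0 ω) hb.le)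
      ((div_le_one hb).2 (hXb ω))
    rwa [show X ω / b * (t * b) = t * X ω by field_simp] at h
  have hexp : 0 ≤ exp (t * b) - 1 := sub_nonneg.2 (one_le_exp (by positivity))
  calc ∑ ω, p ω * exp (t * X ω)
      ≤ ∑ ω, p ω * (1 + X ω / b * (exp (t * b) - 1)) :=
        Finset.sum_le_sum fun ω _ => mul_le_mul_of_nonneg_left (hconv ω) (hp0 ω)
    _ = 1 + (∑ ω, p ω * X ω) / b * (exp (t * b) - 1) := by
        simp only [mul_add, mul_one, Finset.sum_add_distrib, hp1, Finset.sum_div,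
          Finset.sum_mul]
        congr 1
        exact Finset.sum_congr rfl fun ω _ => by ring
    _ ≤ 1 + μ / b * (exp (t * b) - 1) := by gcongr
    _ ≤ exp (μ / b * (exp (t * b) - 1)) := by
        linarith [add_one_le_exp (μ / b * (exp (t * b) - 1))]

theorem chernoff_sum_ge_le_exp (hp0 : ∀ ω, 0 ≤ p ω) (hp1 : ∑ ω, p ω = 1) {b μ δ : ℝ}
    (hb : 0 < b) (hX0 : ∀ ω, 0 ≤ X ω) (hXb : ∀ ω, X ω ≤ b) (hμ : ∑ ω, p ω * X ω ≤ μ)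
    (hδ0 : 0 ≤ δ) (hδ1 : δ ≤ 1) (M : ℕ) :
    ∑ C : Fin M → Ω, (if M * ((1 + δ) * μ) ≤ ∑ m, X (C m) then ∏ m, p (C m) else 0)
      ≤ exp (-(M * μ / b * (δ ^ 2 / 3))) := by
  have hμ0 : 0 ≤ μ := (Finset.sum_nonneg fun ω _ => mul_nonneg (hp0 ω) (hX0 ω)).trans hμ
  -- the tilt `t = 2δ / (3b)` makes the exponent `M μ / b * (e^s - 1 - s (1 + δ))`, `s = 2δ/3`
  set t := 2 / 3 * δ / b
  have ht : 0 ≤ t := by positivity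
  have hmgf := sum_mul_exp_mul_le_exp hp0 hp1 hb hX0 hXb hμ ht
  have hmgf0 : 0 ≤ ∑ ω, p ω * exp (t * X ω) :=
    Finset.sum_nonneg fun ω _ => mul_nonneg (hp0 ω) (exp_nonneg _)
  calc _ ≤ exp (-(t * (M * ((1 + δ) * μ)))) * (∑ ω, p ω * exp (t * X ω)) ^ M :=
        sum_pi_ite_le_exp_mul_pow hp0 X ht _ M
    _ ≤ exp (-(t * (M * ((1 + δ) * μ)))) * exp (μ / b * (exp (t * b) - 1)) ^ M := by
        gcongr
    _ = exp (M * μ / b * (exp (2 / 3 * δ) - 1 - 2 / 3 * δ * (1 + δ))) := by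
        rw [← exp_nat_mul, ← exp_add, div_mul_cancel₀ _ hb.ne']
        congr 1
        ring
    _ ≤ exp (-(M * μ / b * (δ ^ 2 / 3))) := by
        rw [exp_le_exp, ← mul_neg]
        gcongr
        exact exp_two_thirds_mul_sub_le hδ0 hδ1

end Chernoff

section TypicalDensity

variable {U V : Type} [Fintype U] (Q : U → ℝ) (W : U → V → ℝ) {n : ℕ}

theorem sum_prodPMF (hQ : ∑ u, Q u = 1) (n : ℕ) : ∑ x, prodPMF Q n x = 1 := by
  simp only [prodPMF, ← Fintype.prod_sum, hQ, Finset.prod_const_one]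

theorem sum_prodPMF_mul_prodChannel (y : Fin n → V) :
    ∑ x, prodPMF Q n x * prodChannel W n x y = prodPMF (outputMarginal Q W) n y := by
  simp only [prodPMF, prodChannel, outputMarginal, ← Finset.prod_mul_distrib, Fintype.prod_sum]

variable [Fintype V]

noncomputable def typicalLikelihoodRatio (ε : ℝ) (y : Fin n → V) (x : Fin n → U) : ℝ :=
  if (x, y) ∈ typicalSet Q W n ε then
    prodChannel W n x y / prodPMF (outputMarginal Q W) n y
  else 0

theorem DC1_eq_inv_mul_sum_typicalLikelihoodRatio (M : ℕ) (ε : ℝ) (C : Fin M → Fin n → U)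
    (y : Fin n → V) :
    DC1 Q W n M ε C y = (M : ℝ)⁻¹ * ∑ m, typicalLikelihoodRatio Q W ε y (C m) := by
  simp only [DC1, PC1, typicalLikelihoodRatio, mul_div_assoc, Finset.sum_div, ite_div, zero_div]

theorem typicalLikelihoodRatio_nonneg (hW : ∀ u v, 0 ≤ W u v) (ε : ℝ) {y : Fin n → V}
    (hy : 0 ≤ prodPMF (outputMarginal Q W) n y) (x : Fin n → U) :
    0 ≤ typicalLikelihoodRatio Q W ε y x := by
  unfold typicalLikelihoodRatio
  split_ifs
  · exact div_nonneg (Finset.prod_nonneg fun i _ => hW _ _) hy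
  · exact le_rfl

theorem typicalLikelihoodRatio_le (ε : ℝ) (y : Fin n → V) (x : Fin n → U) :
    typicalLikelihoodRatio Q W ε y x ≤ (2 : ℝ) ^ ((n : ℝ) * (mutualInfo Q W + ε)) := by
  have hpos : (0 : ℝ) < (2 : ℝ) ^ ((n : ℝ) * (mutualInfo Q W + ε)) := by positivity
  unfold typicalLikelihoodRatio
  split_ifs with hxy
  · set r := prodChannel W n x y / prodPMF (outputMarginal Q W) n y
    rcases le_or_gt r 0 with hr | hr
    · exact hr.trans hpos.le
    rcases Nat.eq_zero_or_pos n with rfl | hn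
    · simp [r, prodChannel, prodPMF]
    have hlog : (1 / (n : ℝ)) * logb 2 r ≤ mutualInfo Q W + ε := hxy
    rw [one_div, inv_mul_le_iff₀ (by positivity)] at hlog
    exact (logb_le_iff_le_rpow (by norm_num) hr).1 hlog
  · exact hpos.le

theorem sum_prodPMF_mul_typicalLikelihoodRatio_le_one (hQ : ∀ u, 0 ≤ Q u)
    (hW : ∀ u v, 0 ≤ W u v) (ε : ℝ) {y : Fin n → V}
    (hy : 0 < prodPMF (outputMarginal Q W) n y) :
    ∑ x, prodPMF Q n x * typicalLikelihoodRatio Q W ε y x ≤ 1 := by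
  have hratio : ∀ x, typicalLikelihoodRatio Q W ε y x
      ≤ prodChannel W n x y / prodPMF (outputMarginal Q W) n y := fun x => by
    unfold typicalLikelihoodRatio
    split_ifs
    · exact le_rfl
    · exact div_nonneg (Finset.prod_nonneg fun i _ => hW _ _) hy.le
  calc ∑ x, prodPMF Q n x * typicalLikelihoodRatio Q W ε y x
      ≤ ∑ x, prodPMF Q n x * (prodChannel W n x y / prodPMF (outputMarginal Q W) n y) :=
        Finset.sum_le_sum fun x _ => mul_le_mul_of_nonneg_left (hratio x)
          (Finset.prod_nonneg fun i _ => hQ _)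
    _ = 1 := by
        simp only [← mul_div_assoc, ← Finset.sum_div, sum_prodPMF_mul_prodChannel,
          div_self hy.ne']

end TypicalDensity

theorem typical_density_high_prob_general {U V : Type} [Fintype U] [Fintype V]
    (Q : U → ℝ) (W : U → V → ℝ) (hQ : IsPMF Q) (hW : ∀ u, IsPMF (W u))
    (R : ℝ) (ε : ℝ) (β₂ : ℝ) (hβ₂ : 0 < β₂) (n : ℕ)
    (y : Fin n → V) (hy : 0 < prodPMF (outputMarginal Q W) n y) :
    cbP Q n ⌈(2 : ℝ) ^ ((n : ℝ) * R)⌉₊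
      (fun C => 1 + (2 : ℝ) ^ (-(β₂ * n)) ≤ DC1 Q W n ⌈(2 : ℝ) ^ ((n : ℝ) * R)⌉₊ ε C y)
      ≤ Real.exp (-(1 / 3) * (2 : ℝ) ^ ((n : ℝ) * (R - mutualInfo Q W - ε - 2 * β₂))) := by
  set M := ⌈(2 : ℝ) ^ ((n : ℝ) * R)⌉₊
  set b := (2 : ℝ) ^ ((n : ℝ) * (mutualInfo Q W + ε))
  set δ := (2 : ℝ) ^ (-(β₂ * n))
  have hW0 : ∀ u v, 0 ≤ W u v := fun u => (hW u).1
  have hM : (0 : ℝ) < M := Nat.cast_pos.2 (Nat.ceil_pos.2 (by positivity))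
  have hδ1 : δ ≤ 1 := rpow_le_one_of_one_le_of_nonpos (by norm_num) (by simp; positivity)
  have hchernoff := chernoff_sum_ge_le_exp (p := prodPMF Q n)
    (fun x => Finset.prod_nonneg fun i _ => hQ.1 _) (sum_prodPMF Q hQ.2 n) (by positivity : 0 < b)
    (typicalLikelihoodRatio_nonneg Q W hW0 ε hy.le) (typicalLikelihoodRatio_le Q W ε y)
    (sum_prodPMF_mul_typicalLikelihoodRatio_le_one Q W hQ.1 hW0 ε hy) (by positivity) hδ1 M
  have hexponent : (2 : ℝ) ^ ((n : ℝ) * (R - mutualInfo Q W - ε - 2 * β₂))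
      = (2 : ℝ) ^ ((n : ℝ) * R) / b * δ ^ 2 := by
    rw [← rpow_natCast, ← rpow_mul (by norm_num), ← rpow_sub (by norm_num),
      ← rpow_add (by norm_num)]
    ring_nf
  calc _ ≤ exp (-(M / b * (δ ^ 2 / 3))) := by
        simpa only [cbP, cbProb, DC1_eq_inv_mul_sum_typicalLikelihoodRatio, le_inv_mul_iff₀ hM,
          mul_one] using hchernoff
    _ ≤ _ := by
        rw [exp_le_exp, hexponent]
        have hceil : (2 : ℝ) ^ ((n : ℝ) * R) ≤ M := Nat.le_ceil _
        have : (2 : ℝ) ^ ((n : ℝ) * R) / b * δ ^ 2 ≤ M / b * δ ^ 2 := by gcongr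
        linear_combination (1 / 3) * this

/-- **Pointwise high-probability bound on the typical density.** For fixed `v^n` in the
support of `Q_{V^n}`, the probability over the codebook draw that
`D_{𝒞,1}(v^n) ≥ 1 + 2^{-β₂ n}` is at most `exp(−(1/3) 2^{n(R−I_Q(U;V)−ε−2β₂)})`. -/
theorem typical_density_high_prob {U V : Type} [Fintype U] [Fintype V]
    (Q : U → ℝ) (W : U → V → ℝ) (hQ : IsPMF Q) (hW : ∀ u, IsPMF (W u))
    (R : ℝ) (hR0 : 0 < R) (ε : ℝ) (hε : 0 < ε) (β₂ : ℝ) (hβ₂ : 0 < β₂) (n : ℕ)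
    (y : Fin n → V) (hy : 0 < prodPMF (outputMarginal Q W) n y) :
    cbP Q n ⌈(2 : ℝ) ^ ((n : ℝ) * R)⌉₊
      (fun C => 1 + (2 : ℝ) ^ (-(β₂ * n)) ≤ DC1 Q W n ⌈(2 : ℝ) ^ ((n : ℝ) * R)⌉₊ ε C y)
      ≤ Real.exp (-(1 / 3) * (2 : ℝ) ^ ((n : ℝ) * (R - mutualInfo Q W - ε - 2 * β₂))) :=
  typical_density_high_prob_general Q W hQ hW R ε β₂ hβ₂ n y hy
end

section
/- Deterministic relative-entropy bound for good codebooks: Fix ε > 0, β₁ > 0, β₂ > 0, and n with β₁ n ≥ 1. Let 𝒞 be any codebook (tuple of codewords in the support of Q_{U^n}) such that (i) ∑_{v^n} P_{𝒞,2}(v^n) ≤ 2 · 2^{−β₁ n}, (ii) D_{𝒞,1}(v^n) ≤ 1 + 2^{−β₂ n} for all v^n with Q_{V^n}(v^n) > 0, and (iii) D_{𝒞,2}(v^n) ≤ (max_{v : Q_V(v) > 0} 1/Q_V(v))^n for all v^n with Q_{V^n}(v^n) > 0. Then d(P_{V^n|𝒞}, Q_{V^n}) ≤ 2 · 2^{−β₁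 n} (β₁ n + log₂ e − 1) + 2^{−β₂ n} log₂ e + 2n · 2^{−β₁ n} log₂ (max_{v : Q_V(v) > 0} 1/Q_V(v)). -/
open scoped BigOperators Classical
open Finset

/-!
Write `P = P₁ + P₂` and `s = ∑ P₂ ≤ t = 2·2^{-β₁n}`. Splitting `Q_{V^n}` as
`(1 - s) Q_{V^n} + s Q_{V^n}`, the log-sum inequality and conditions (ii), (iii) give
`d(P, Q_{V^n}) ≤ (1 - s) log(1 + 2^{-β₂n}) + s log K + h(s)`, where `K = (max 1/Q_V)^n ≥ 1` and
`h` is the binary entropy. Since `h(s) ≤ s (log e - log s)` and `s ↦ s (log e + log K - log s)`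
increases on `[0, K]`, the value at `s` is at most the value at `t ≤ 1`.
-/

open Real

namespace Real

lemma logb_le_sub_one_mul_logb_exp {b x : ℝ} (hb : 1 < b) (hx : 0 < x) :
    logb b x ≤ (x - 1) * logb b (exp 1) := by
  rw [logb, logb, log_exp, ← mul_div_assoc, mul_one]
  exact div_le_div_of_nonneg_right (log_le_sub_one_of_pos hx) (log_nonneg hb.le)

/-- The log-sum inequality for two terms. -/
lemma add_mul_logb_div_add_le {b a₁ a₂ x₁ x₂ : ℝ} (hb : 1 < b) (ha₁ : 0 ≤ a₁) (ha₂ : 0 ≤ a₂)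
    (hx₁ : 0 ≤ x₁) (hx₂ : 0 ≤ x₂) (h₁ : x₁ = 0 → a₁ = 0) (h₂ : x₂ = 0 → a₂ = 0) :
    (a₁ + a₂) * logb b ((a₁ + a₂) / (x₁ + x₂)) ≤
      a₁ * logb b (a₁ / x₁) + a₂ * logb b (a₂ / x₂) := by
  rcases hx₁.eq_or_lt with rfl | hx₁
  · simp [h₁ rfl]
  rcases hx₂.eq_or_lt with rfl | hx₂
  · simp [h₂ rfl]
  have hx : 0 < x₁ + x₂ := by positivity
  have key := convexOn_mul_log.2 (Set.mem_Ici.2 (div_nonneg ha₁ hx₁.le))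
    (Set.mem_Ici.2 (div_nonneg ha₂ hx₂.le)) (div_nonneg hx₁.le hx.le)
    (div_nonneg hx₂.le hx.le) (by rw [← add_div, div_self hx.ne'])
  have hmix : x₁ / (x₁ + x₂) * (a₁ / x₁) + x₂ / (x₁ + x₂) * (a₂ / x₂)
      = (a₁ + a₂) / (x₁ + x₂) := by
    field_simp
  simp only [smul_eq_mul, hmix] at key
  simp only [logb, ← mul_div_assoc, ← add_div]
  refine div_le_div_of_nonneg_right ?_ (log_nonneg hb.le)
  calc (a₁ + a₂) * log ((a₁ + a₂) / (x₁ + x₂))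
      = (x₁ + x₂) * ((a₁ + a₂) / (x₁ + x₂) * log ((a₁ + a₂) / (x₁ + x₂))) := by
        field_simp
    _ ≤ (x₁ + x₂) * (x₁ / (x₁ + x₂) * (a₁ / x₁ * log (a₁ / x₁))
          + x₂ / (x₁ + x₂) * (a₂ / x₂ * log (a₂ / x₂))) := by gcongr
    _ = a₁ * log (a₁ / x₁) + a₂ * log (a₂ / x₂) := by field_simp

lemma mul_logb_div_mul_le {b a q l c : ℝ} (hb : 1 < b) (ha : 0 ≤ a) (hq : 0 < q) (hl : 0 ≤ l)
    (hla : l = 0 → a = 0) (hc : a / q ≤ c) :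
    a * logb b (a / (l * q)) ≤ a * (logb b c - logb b l) := by
  rcases ha.eq_or_lt with rfl | ha
  · simp
  have hl : 0 < l := hl.lt_of_ne fun h => ha.ne' (hla h.symm)
  rw [div_mul_eq_div_div_swap, logb_div (div_pos ha hq).ne' hl.ne']
  gcongr

-- the log-sum inequality with `q` split as `(1 - l) * q + l * q`
lemma add_mul_logb_div_le {b a₁ a₂ q l c₁ c₂ : ℝ} (hb : 1 < b) (ha₁ : 0 ≤ a₁) (ha₂ : 0 ≤ a₂)
    (hq : 0 < q) (hl₀ : 0 ≤ l) (hl₁ : l ≤ 1) (h₁ : 1 - l = 0 → a₁ = 0) (h₂ : l = 0 → a₂ = 0)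
    (hc₁ : a₁ / q ≤ c₁) (hc₂ : a₂ / q ≤ c₂) :
    (a₁ + a₂) * logb b ((a₁ + a₂) / q) ≤
      a₁ * (logb b c₁ - logb b (1 - l)) + a₂ * (logb b c₂ - logb b l) := by
  have hsplit : (1 - l) * q + l * q = q := by ring
  calc (a₁ + a₂) * logb b ((a₁ + a₂) / q)
      ≤ a₁ * logb b (a₁ / ((1 - l) * q)) + a₂ * logb b (a₂ / (l * q)) := by
        conv_lhs => rw [← hsplit]
        refine add_mul_logb_div_add_le hb ha₁ ha₂ (mul_nonneg (by linarith) hq.le)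
          (mul_nonneg hl₀ hq.le) ?_ ?_
        · intro h; exact h₁ ((mul_eq_zero.1 h).resolve_right hq.ne')
        · intro h; exact h₂ ((mul_eq_zero.1 h).resolve_right hq.ne')
    _ ≤ _ := add_le_add (mul_logb_div_mul_le hb ha₁ hq (by linarith) h₁ hc₁)
        (mul_logb_div_mul_le hb ha₂ hq hl₀ h₂ hc₂)

-- the derivative of `s ↦ s * (logb b (exp 1) + logb b K - logb b s)` is `logb b K - logb b s`
lemma mul_sub_logb_le_of_le {b s t K : ℝ} (hb : 1 < b) (hs : 0 ≤ s) (hst : s ≤ t)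
    (htK : t ≤ K) :
    s * (logb b (exp 1) + logb b K - logb b s) ≤
      t * (logb b (exp 1) + logb b K - logb b t) := by
  have hL : 0 ≤ logb b (exp 1) := logb_nonneg hb (one_le_exp zero_le_one)
  rcases hs.eq_or_lt with rfl | hs
  · rcases hst.eq_or_lt with rfl | ht
    · simp
    have : logb b t ≤ logb b K := logb_le_logb_of_le hb ht htK
    simp only [zero_mul]
    exact mul_nonneg ht.le (by linarith)
  have ht : 0 < t := hs.trans_le hst
  have htan : s * logb b (t / s) ≤ (t - s) * logb b (exp 1) := by
    calc s * logb b (t / s) ≤ s * ((t / s - 1) * logb b (exp 1)) :=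
          mul_le_mul_of_nonneg_left (logb_le_sub_one_mul_logb_exp hb (div_pos ht hs)) hs.le
      _ = (t - s) * logb b (exp 1) := by field_simp
  have hK : 0 ≤ (t - s) * (logb b K - logb b t) :=
    mul_nonneg (by linarith) (by linarith [logb_le_logb_of_le hb ht htK])
  rw [logb_div ht.ne' hs.ne'] at htan
  nlinarith

end Real

lemma binEnt_le {s : ℝ} (hs₀ : 0 ≤ s) (hs₁ : s ≤ 1) :
    binEnt s ≤ s * (logb 2 (exp 1) - logb 2 s) := by
  have hL : 0 ≤ logb 2 (exp 1) := logb_nonneg one_lt_two (one_le_exp zero_le_one)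
  suffices h : -((1 - s) * logb 2 (1 - s)) ≤ s * logb 2 (exp 1) by
    rw [binEnt]; linarith
  rcases hs₁.eq_or_lt with rfl | hs₁
  · simpa using hL
  have hpos : 0 < 1 - s := by linarith
  have := logb_le_sub_one_mul_logb_exp one_lt_two (inv_pos.2 hpos)
  rw [logb_inv] at this
  calc -((1 - s) * logb 2 (1 - s)) = (1 - s) * -logb 2 (1 - s) := by ring
    _ ≤ (1 - s) * (((1 - s)⁻¹ - 1) * logb 2 (exp 1)) := by gcongr
    _ = s * logb 2 (exp 1) := by field_simp; ring

lemma mul_logb_add_binEnt_le {s t K : ℝ} (hs : 0 ≤ s) (hst : s ≤ t) (ht₁ : t ≤ 1)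
    (htK : t ≤ K) :
    s * logb 2 K + binEnt s ≤ t * (logb 2 (exp 1) + logb 2 K - logb 2 t) := by
  have := binEnt_le hs (hst.trans ht₁)
  have := mul_sub_logb_le_of_le one_lt_two hs hst htK
  linarith

lemma klDiv_add_le {X : Type} [Fintype X] {P₁ P₂ q : X → ℝ} {c₁ c₂ : ℝ}
    (hP₁ : ∀ x, 0 ≤ P₁ x) (hP₂ : ∀ x, 0 ≤ P₂ x) (hsum : ∑ x, (P₁ x + P₂ x) = 1)
    (hq : ∀ x, 0 < P₁ x + P₂ x → 0 < q x)
    (hc₁ : ∀ x, 0 < q x → P₁ x / q x ≤ c₁) (hc₂ : ∀ x, 0 < q x → P₂ x / q x ≤ c₂) :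
    klDiv (fun x => P₁ x + P₂ x) q ≤
      (1 - ∑ x, P₂ x) * logb 2 c₁ + (∑ x, P₂ x) * logb 2 c₂
        + binEnt (∑ x, P₂ x) := by
  set s := ∑ x, P₂ x
  have hs₁ : ∑ x, P₁ x = 1 - s := by rw [← hsum, sum_add_distrib, add_sub_cancel_right]
  have hs₀ : 0 ≤ s := sum_nonneg fun x _ => hP₂ x
  have hs₁' : s ≤ 1 := by linarith [sum_nonneg fun x (_ : x ∈ univ) => hP₁ x]
  have hpt : ∀ x, (if 0 < P₁ x + P₂ x then
        (P₁ x + P₂ x) * logb 2 ((P₁ x + P₂ x) / q x) else 0) ≤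
      P₁ x * (logb 2 c₁ - logb 2 (1 - s))
        + P₂ x * (logb 2 c₂ - logb 2 s) := by
    intro x
    split_ifs with hx
    · refine add_mul_logb_div_le one_lt_two (hP₁ x) (hP₂ x) (hq x hx) hs₀ hs₁'
        (fun h => ?_) (fun h => ?_) (hc₁ x (hq x hx)) (hc₂ x (hq x hx))
      · exact (sum_eq_zero_iff_of_nonneg fun x _ => hP₁ x).1 (hs₁.trans h) x (mem_univ x)
      · exact (sum_eq_zero_iff_of_nonneg fun x _ => hP₂ x).1 h x (mem_univ x)
    · have h₁ : P₁ x = 0 := by linarith [hP₁ x, hP₂ x]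
      have h₂ : P₂ x = 0 := by linarith [hP₁ x, hP₂ x]
      simp [h₁, h₂]
  calc klDiv (fun x => P₁ x + P₂ x) q
      ≤ ∑ x, (P₁ x * (logb 2 c₁ - logb 2 (1 - s))
          + P₂ x * (logb 2 c₂ - logb 2 s)) := sum_le_sum fun x _ => hpt x
    _ = (1 - s) * logb 2 c₁ + s * logb 2 c₂ + binEnt s := by
        rw [sum_add_distrib, ← sum_mul, ← sum_mul, hs₁, binEnt]; ring

lemma one_le_sSup_inv_of_isPMF {X : Type} [Fintype X] {P : X → ℝ} (hP : IsPMF P) :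
    1 ≤ sSup ((fun x => (P x)⁻¹) '' {x | 0 < P x}) := by
  obtain ⟨x, -, hx⟩ := exists_ne_zero_of_sum_ne_zero (hP.2 ▸ one_ne_zero : ∑ x, P x ≠ 0)
  have hx : 0 < P x := (hP.1 x).lt_of_ne' hx
  have hx₁ : P x ≤ 1 := hP.2 ▸ single_le_sum (fun y _ => hP.1 y) (mem_univ x)
  exact (one_le_inv₀ hx).2 hx₁ |>.trans <| le_csSup (Set.toFinite _).bddAbove ⟨x, hx, rfl⟩

section Channel

variable {U V : Type} {Q : U → ℝ} {W : U → V → ℝ} {n M : ℕ} {C : Fin M → Fin n → U}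

lemma isPMF_outputMarginal [Fintype U] [Fintype V] (hQ : IsPMF Q) (hW : ∀ u, IsPMF (W u)) :
    IsPMF (outputMarginal Q W) := by
  refine ⟨fun v => sum_nonneg fun u _ => mul_nonneg (hQ.1 u) ((hW u).1 v), ?_⟩
  simp only [outputMarginal]
  rw [sum_comm, ← hQ.2]
  simp only [← mul_sum, (hW _).2, mul_one]

lemma isPMF_prodChannel [Fintype V] (hW : ∀ u, IsPMF (W u)) (x : Fin n → U) :
    IsPMF (prodChannel W n x) := by
  refine ⟨fun y => prod_nonneg fun i _ => (hW _).1 _, ?_⟩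
  simp only [prodChannel]
  rw [← Fintype.prod_sum]
  exact prod_eq_one fun i _ => (hW _).2

lemma prodPMF_outputMarginal_pos [Fintype U] (hQ : ∀ u, 0 ≤ Q u) (hW : ∀ u v, 0 ≤ W u v)
    {x : Fin n → U} {y : Fin n → V} (hx : 0 < prodPMF Q n x)
    (hxy : 0 < prodChannel W n x y) :
    0 < prodPMF (outputMarginal Q W) n y := by
  have hQx : ∀ i, Q (x i) ≠ 0 := fun i => prod_ne_zero_iff.1 hx.ne' i (mem_univ i)
  have hWxy : ∀ i, W (x i) (y i) ≠ 0 := fun i => prod_ne_zero_iff.1 hxy.ne' i (mem_univ i)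
  refine prod_pos fun i _ => ?_
  calc 0 < Q (x i) * W (x i) (y i) :=
        mul_pos ((hQ _).lt_of_ne' (hQx i)) ((hW _ _).lt_of_ne' (hWxy i))
    _ ≤ outputMarginal Q W (y i) :=
        single_le_sum (f := fun u => Q u * W u (y i))
          (fun u _ => mul_nonneg (hQ u) (hW u _)) (mem_univ _)

lemma inducedDist_eq_PC1_add_PC2 [Fintype U] [Fintype V] (Q : U → ℝ) (ε : ℝ)
    (y : Fin n → V) :
    inducedDist W n M C y = PC1 Q W n M ε C y + PC2 Q W n M ε C y := by
  simp only [inducedDist, PC1, PC2, ← mul_add, ← sum_add_distrib]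
  congr 1
  refine sum_congr rfl fun m _ => ?_
  split_ifs <;> simp

lemma PC1_nonneg [Fintype U] [Fintype V] (hW : ∀ u v, 0 ≤ W u v) (ε : ℝ) (y : Fin n → V) :
    0 ≤ PC1 Q W n M ε C y :=
  mul_nonneg (by positivity) <|
    sum_nonneg fun _ _ => ite_nonneg (prod_nonneg fun _ _ => hW _ _) le_rfl

lemma PC2_nonneg [Fintype U] [Fintype V] (hW : ∀ u v, 0 ≤ W u v) (ε : ℝ) (y : Fin n → V) :
    0 ≤ PC2 Q W n M ε C y :=
  mul_nonneg (by positivity) <|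
    sum_nonneg fun _ _ => ite_nonneg (prod_nonneg fun _ _ => hW _ _) le_rfl

lemma isPMF_inducedDist [Fintype V] (hW : ∀ u, IsPMF (W u)) (hM : 0 < M) :
    IsPMF (inducedDist W n M C) := by
  refine ⟨fun y => mul_nonneg (by positivity) <|
    sum_nonneg fun m _ => (isPMF_prodChannel hW (C m)).1 y, ?_⟩
  simp only [inducedDist]
  rw [← mul_sum, sum_comm]
  simp only [(isPMF_prodChannel hW _).2, sum_const, card_univ, Fintype.card_fin, nsmul_eq_mul,
    mul_one]
  exact inv_mul_cancel₀ (Nat.cast_pos.2 hM).ne'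

lemma prodPMF_outputMarginal_pos_of_inducedDist_pos [Fintype U] (hQ : ∀ u, 0 ≤ Q u)
    (hW : ∀ u v, 0 ≤ W u v) (hC : ∀ m, 0 < prodPMF Q n (C m)) {y : Fin n → V}
    (hy : 0 < inducedDist W n M C y) :
    0 < prodPMF (outputMarginal Q W) n y := by
  have hsum : ∑ m, prodChannel W n (C m) y ≠ 0 := fun h => by simp [inducedDist, h] at hy
  obtain ⟨m, -, hm⟩ := exists_ne_zero_of_sum_ne_zero hsum
  exact prodPMF_outputMarginal_pos hQ hW (hC m)
    ((prod_nonneg fun i _ => hW _ _).lt_of_ne' hm)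

lemma klDiv_inducedDist_le [Fintype U] [Fintype V] (hQ : ∀ u, 0 ≤ Q u)
    (hW : ∀ u, IsPMF (W u)) (hM : 0 < M) (hC : ∀ m, 0 < prodPMF Q n (C m)) {ε c₁ c₂ : ℝ}
    (h₁ : ∀ y, 0 < prodPMF (outputMarginal Q W) n y → DC1 Q W n M ε C y ≤ c₁)
    (h₂ : ∀ y, 0 < prodPMF (outputMarginal Q W) n y → DC2 Q W n M ε C y ≤ c₂) :
    klDiv (inducedDist W n M C) (prodPMF (outputMarginal Q W) n) ≤
      (1 - ∑ y, PC2 Q W n M ε C y) * logb 2 c₁ + (∑ y, PC2 Q W n M ε C y) * logb 2 c₂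
        + binEnt (∑ y, PC2 Q W n M ε C y) := by
  have hW₀ : ∀ u v, 0 ≤ W u v := fun u => (hW u).1
  have hsplit : inducedDist W n M C = fun y => PC1 Q W n M ε C y + PC2 Q W n M ε C y :=
    funext (inducedDist_eq_PC1_add_PC2 Q ε)
  rw [hsplit]
  exact klDiv_add_le (PC1_nonneg hW₀ ε) (PC2_nonneg hW₀ ε)
    (hsplit ▸ (isPMF_inducedDist hW hM).2)
    (fun y hy => prodPMF_outputMarginal_pos_of_inducedDist_pos hQ hW₀ hC (hsplit ▸ hy)) h₁ h₂

end Channel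

theorem klDiv_good_codebook_bound_general {U V : Type} [Fintype U] [Fintype V]
    (Q : U → ℝ) (W : U → V → ℝ) (hQ : IsPMF Q) (hW : ∀ u, IsPMF (W u))
    (ε : ℝ) (β₁ : ℝ) (β₂ : ℝ)
    (n : ℕ) (hn : 1 ≤ β₁ * n) (M : ℕ) (hM : 0 < M)
    (C : Fin M → Fin n → U) (hC : ∀ m, 0 < prodPMF Q n (C m))
    (h1 : ∑ y : Fin n → V, PC2 Q W n M ε C y ≤ 2 * (2 : ℝ) ^ (-(β₁ * n)))
    (h2 : ∀ y : Fin n → V, 0 < prodPMF (outputMarginal Q W) n y →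
      DC1 Q W n M ε C y ≤ 1 + (2 : ℝ) ^ (-(β₂ * n)))
    (h3 : ∀ y : Fin n → V, 0 < prodPMF (outputMarginal Q W) n y →
      DC2 Q W n M ε C y ≤ (maxInvQV Q W) ^ n) :
    klDiv (inducedDist W n M C) (prodPMF (outputMarginal Q W) n) ≤
      2 * (2 : ℝ) ^ (-(β₁ * n)) * (β₁ * n + Real.logb 2 (Real.exp 1) - 1)
        + (2 : ℝ) ^ (-(β₂ * n)) * Real.logb 2 (Real.exp 1)
        + 2 * n * (2 : ℝ) ^ (-(β₁ * n)) * Real.logb 2 (maxInvQV Q W) := by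
  have hkl := klDiv_inducedDist_le hQ.1 hW hM hC h2 h3
  set s := ∑ y, PC2 Q W n M ε C y
  set δ := (2 : ℝ) ^ (-(β₂ * n))
  set t := 2 * (2 : ℝ) ^ (-(β₁ * n))
  have ht : t = 2 ^ (1 - β₁ * n) := by rw [sub_eq_add_neg, rpow_add two_pos, rpow_one]
  have ht₁ : t ≤ 1 := ht ▸ rpow_le_one_of_one_le_of_nonpos one_le_two (by linarith)
  have hlogt : logb 2 t = 1 - β₁ * n := by rw [ht, logb_rpow two_pos (by norm_num)]
  have hK : 1 ≤ maxInvQV Q W ^ n :=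
    one_le_pow₀ (one_le_sSup_inv_of_isPMF (isPMF_outputMarginal hQ hW))
  have hs : 0 ≤ s := sum_nonneg fun y _ => PC2_nonneg (fun u => (hW u).1) ε y
  have hδ : (1 - s) * logb 2 (1 + δ) ≤ δ * logb 2 (exp 1) := by
    have hlog : 0 ≤ logb 2 (1 + δ) :=
      logb_nonneg one_lt_two (le_add_of_nonneg_right (by positivity))
    have := logb_le_sub_one_mul_logb_exp one_lt_two (by positivity : 0 < 1 + δ)
    rw [add_sub_cancel_left] at this
    nlinarith
  calc klDiv (inducedDist W n M C) (prodPMF (outputMarginal Q W) n)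
      ≤ (1 - s) * logb 2 (1 + δ) + (s * logb 2 (maxInvQV Q W ^ n) + binEnt s) := by
        linarith
    _ ≤ δ * logb 2 (exp 1) + t * (logb 2 (exp 1)
          + logb 2 (maxInvQV Q W ^ n) - logb 2 t) :=
        add_le_add hδ (mul_logb_add_binEnt_le hs h1 ht₁ (ht₁.trans hK))
    _ = _ := by rw [logb_pow, hlogt]; ring

/-- **Deterministic relative-entropy bound for good codebooks.** Any codebook satisfying the
three goodness conditions (i)–(iii) has
`d(P_{V^n|𝒞}, Q_{V^n}) ≤ 2·2^{−β₁n}(β₁n + log₂ e − 1) + 2^{−β₂n} log₂ e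
  + 2n·2^{−β₁n} log₂(max_{v:Q_V(v)>0} 1/Q_V(v))`. -/
theorem klDiv_good_codebook_bound {U V : Type} [Fintype U] [Fintype V]
    (Q : U → ℝ) (W : U → V → ℝ) (hQ : IsPMF Q) (hW : ∀ u, IsPMF (W u))
    (ε : ℝ) (hε : 0 < ε) (β₁ : ℝ) (hβ₁ : 0 < β₁) (β₂ : ℝ) (hβ₂ : 0 < β₂)
    (n : ℕ) (hn : 1 ≤ β₁ * n) (M : ℕ) (hM : 0 < M)
    (C : Fin M → Fin n → U) (hC : ∀ m, 0 < prodPMF Q n (C m))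
    (h1 : ∑ y : Fin n → V, PC2 Q W n M ε C y ≤ 2 * (2 : ℝ) ^ (-(β₁ * n)))
    (h2 : ∀ y : Fin n → V, 0 < prodPMF (outputMarginal Q W) n y →
      DC1 Q W n M ε C y ≤ 1 + (2 : ℝ) ^ (-(β₂ * n)))
    (h3 : ∀ y : Fin n → V, 0 < prodPMF (outputMarginal Q W) n y →
      DC2 Q W n M ε C y ≤ (maxInvQV Q W) ^ n) :
    klDiv (inducedDist W n M C) (prodPMF (outputMarginal Q W) n) ≤
      2 * (2 : ℝ) ^ (-(β₁ * n)) * (β₁ * n + Real.logb 2 (Real.exp 1) - 1)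
        + (2 : ℝ) ^ (-(β₂ * n)) * Real.logb 2 (Real.exp 1)
        + 2 * n * (2 : ℝ) ^ (-(β₁ * n)) * Real.logb 2 (maxInvQV Q W) :=
  klDiv_good_codebook_bound_general Q W hQ hW ε β₁ β₂ n hn M hM C hC h1 h2 h3
end
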